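/- arXiv:1311.6222 — 2 statements merged into one kernel-verified Lean document; each statement's English description precedes it below -/
import Mathlib

section
/- For every n ≥ 1, the set of n × n real matrices A whose characteristic polynomial, viewed over ℂ, has a repeated root (i.e., A has a complex eigenvalue of algebraic multiplicity at least two) has Lebesgue measure zero in the space ℝ^{n×n} of all n × n real matrices. -/
open MeasureTheory Polynomial

private lemma null_roots (p : Polynomial ℝ) (hp : p ≠ 0) :
    volume {x : ℝ | p.eval x = 0} = 0 :=
  Set.Finite.measure_zero (Polynomial.finite_setOf_isRoot hp) _

private lemma null_mv (m : ℕ) : ∀ (F : MvPolynomial (Fin m) ℝ), F ≠ 0 →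
    volume {x : Fin m → ℝ | MvPolynomial.eval x F = 0} = 0 := by
  induction m with
  | zero =>
    intro F hF
    obtain ⟨c, rfl⟩ := MvPolynomial.C_surjective (Fin 0) F
    have hc : c ≠ 0 := by simpa using hF
    convert measure_empty (μ := (volume : Measure (Fin 0 → ℝ)))
    ext x
    simp [hc]
  | succ m ih =>
    intro F hF
    set G := MvPolynomial.finSuccEquiv ℝ m F with hGdef
    have hG0 : G ≠ 0 := by
      intro h
      apply hF
      have := congrArg (MvPolynomial.finSuccEquiv ℝ m).symm h
      simpa [hGdef] using this
    have hcoeff : G.coeff G.natDegree ≠ 0 := fun h => hG0 (Polynomial.leadingCoeff_eq_zero.mp h)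
    set T : Set (ℝ × (Fin m → ℝ)) :=
      {q | MvPolynomial.eval (Fin.cons q.1 q.2 : Fin (m + 1) → ℝ) F = 0} with hTdef
    have hcont : Continuous fun q : ℝ × (Fin m → ℝ) => (Fin.cons q.1 q.2 : Fin (m + 1) → ℝ) := by
      apply continuous_pi
      intro i
      refine Fin.cases ?_ ?_ i
      · simpa using continuous_fst
      · intro j
        simpa [Function.comp_def] using (continuous_apply j).comp continuous_snd
    have hTmeas : MeasurableSet T :=
      measurableSet_eq_fun ((MvPolynomial.continuous_eval F).comp hcont).measurable measurable_const
    have hpre : {x : Fin (m + 1) → ℝ | MvPolynomial.eval x F = 0} =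
        (MeasurableEquiv.piFinSuccAbove (fun _ : Fin (m + 1) => ℝ) 0) ⁻¹' T := by
      ext x
      simp only [Set.mem_setOf_eq, Set.mem_preimage, hTdef,
        MeasurableEquiv.piFinSuccAbove_apply, Fin.insertNthEquiv, Equiv.coe_fn_symm_mk]
      rw [show (Fin.cons (x 0) (Fin.removeNth 0 x) : Fin (m+1) → ℝ) = x by
        rw [Fin.removeNth_zero]; exact Fin.cons_self_tail x]
    rw [hpre, (volume_preserving_piFinSuccAbove (fun _ : Fin (m + 1) => ℝ) 0).measure_preimage
      hTmeas.nullMeasurableSet]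
    have hswap : (volume : Measure (ℝ × (Fin m → ℝ))) T
        = ((volume : Measure (Fin m → ℝ)).prod (volume : Measure ℝ)) (Prod.swap ⁻¹' T) := by
      rw [Measure.volume_eq_prod, ← Measure.prod_swap,
        Measure.map_apply measurable_swap hTmeas]
    rw [hswap]
    rw [Measure.measure_prod_null (measurable_swap hTmeas)]
    have hae : ∀ᵐ y : Fin m → ℝ, MvPolynomial.eval y (G.coeff G.natDegree) ≠ 0 := by
      rw [ae_iff]
      simpa using ih _ hcoeff
    filter_upwards [hae] with y hy
    have hpoly : Polynomial.map (MvPolynomial.eval y) G ≠ 0 := by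
      intro h
      apply hy
      rw [← Polynomial.coeff_map (MvPolynomial.eval y) G.natDegree, h, Polynomial.coeff_zero]
    have : (Prod.mk y ⁻¹' (Prod.swap ⁻¹' T))
        = {a : ℝ | Polynomial.eval a (Polynomial.map (MvPolynomial.eval y) G) = 0} := by
      ext a
      simp only [Set.mem_preimage, Set.mem_setOf_eq, hTdef, Prod.swap_prod_mk]
      rw [MvPolynomial.eval_eq_eval_mv_eval']
    simp only [Pi.zero_apply]
    rw [this]
    exact null_roots _ hpoly

private lemma aeval_matrix_map {R S : Type*} [CommRing R] [CommRing S] (φ : R →+* S)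
    {m : Type*} [Fintype m] [DecidableEq m] (M : Matrix m m R) (p : R[X]) :
    (Polynomial.aeval M p).map φ = Polynomial.aeval (M.map φ) (p.map φ) := by
  have hcomp : (φ.mapMatrix.comp (algebraMap R (Matrix m m R)))
      = (algebraMap S (Matrix m m S)).comp φ := by
    ext r i j
    simp [Matrix.algebraMap_eq_diagonal, Matrix.diagonal_apply, apply_ite φ]
  rw [← RingHom.mapMatrix_apply, Polynomial.aeval_def, Polynomial.aeval_def,
    Polynomial.hom_eval₂, Polynomial.eval₂_map, hcomp, RingHom.mapMatrix_apply]

-- evaluation of charpoly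
private lemma charpoly_eval {R : Type*} [CommRing R] {m : Type*} [Fintype m] [DecidableEq m]
    (M : Matrix m m R) (r : R) :
    M.charpoly.eval r = (Matrix.scalar m r - M).det := by
  rw [Matrix.charpoly, _root_.eval_det, Matrix.matPolyEquiv_charmatrix]
  simp

private lemma mem_spectrum_of_root {K : Type*} [Field K] {m : Type*} [Fintype m] [DecidableEq m]
    (B : Matrix m m K) (z : K) (hz : B.charpoly.eval z = 0) : z ∈ spectrum K B := by
  rw [spectrum.mem_iff]
  intro hu
  have hdet := (Matrix.isUnit_iff_isUnit_det _).mp hu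
  rw [isUnit_iff_ne_zero] at hdet
  apply hdet
  rw [charpoly_eval] at hz
  rw [← hz]
  rfl

private lemma det_aeval_deriv_eq_zero {n : ℕ} (A : Matrix (Fin n) (Fin n) ℝ) (z : ℂ)
    (hz : 2 ≤ (A.charpoly.map (algebraMap ℝ ℂ)).rootMultiplicity z) :
    Matrix.det (Polynomial.aeval A (Polynomial.derivative A.charpoly)) = 0 := by
  set ψ := algebraMap ℝ ℂ
  set B := A.map ψ with hBdef
  have hQeq : B.charpoly = A.charpoly.map ψ := Matrix.charpoly_map A ψ
  set Q := B.charpoly with hQdef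
  have hQ0 : Q ≠ 0 := (Matrix.charpoly_monic B).ne_zero
  have hdvd : (X - C z) ^ 2 ∣ Q := by
    rw [← hQeq] at hz
    exact dvd_trans (pow_dvd_pow _ hz) (Polynomial.pow_rootMultiplicity_dvd _ z)
  obtain ⟨h, hh⟩ := hdvd
  have hQz : Q.eval z = 0 := by rw [hh]; simp
  have hQz' : Q.derivative.eval z = 0 := by
    rw [hh]
    simp [Polynomial.derivative_mul, Polynomial.derivative_pow]
  have hzB : z ∈ spectrum ℂ B := mem_spectrum_of_root B z hQz
  have h0 : (0 : ℂ) ∈ spectrum ℂ (Polynomial.aeval B Q.derivative) := by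
    have := spectrum.subset_polynomial_aeval B Q.derivative ⟨z, hzB, hQz'⟩
    exact this
  have hdet : (Polynomial.aeval B Q.derivative).det = 0 := by
    by_contra hne
    exact (spectrum.not_isUnit_of_zero_mem _ h0)
      ((Matrix.isUnit_iff_isUnit_det _).mpr (isUnit_iff_ne_zero.mpr hne))
  apply (algebraMap ℝ ℂ).injective
  rw [map_zero, RingHom.map_det, RingHom.mapMatrix_apply, aeval_matrix_map,
    ← Polynomial.derivative_map, ← Matrix.charpoly_map]
  exact hdet

private noncomputable def discPoly (n : ℕ) : MvPolynomial (Fin n × Fin n) ℝ :=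
  Matrix.det (Polynomial.aeval (Matrix.mvPolynomialX (Fin n) (Fin n) ℝ)
    (Polynomial.derivative (Matrix.charpoly (Matrix.mvPolynomialX (Fin n) (Fin n) ℝ))))

private lemma eval_discPoly {n : ℕ} (x : Fin n × Fin n → ℝ) :
    MvPolynomial.eval x (discPoly n)
    = Matrix.det (Polynomial.aeval (Matrix.of fun i j => x (i, j))
        (Polynomial.derivative (Matrix.charpoly (Matrix.of fun i j => x (i, j))))) := by
  set M := Matrix.mvPolynomialX (Fin n) (Fin n) ℝ with hMdef
  have hM : M.map (MvPolynomial.eval x) = Matrix.of fun i j => x (i, j) := by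
    ext i j
    simp [hMdef, Matrix.mvPolynomialX_apply]
  rw [discPoly, RingHom.map_det, RingHom.mapMatrix_apply, aeval_matrix_map,
    ← Polynomial.derivative_map, ← Matrix.charpoly_map, hM]

private lemma aeval_diagonal {n : ℕ} (d : Fin n → ℝ) (p : ℝ[X]) :
    Polynomial.aeval (Matrix.diagonal d) p = Matrix.diagonal (fun i => p.eval (d i)) := by
  have hhom : (Matrix.diagonalRingHom (Fin n) ℝ).comp (algebraMap ℝ (Fin n → ℝ))
      = algebraMap ℝ (Matrix (Fin n) (Fin n) ℝ) := by
    ext r i j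
    simp [Matrix.algebraMap_eq_diagonal, Matrix.diagonal_apply, Matrix.diagonalRingHom]
    rfl
  have h1 : Polynomial.aeval (Matrix.diagonal d) p
      = (Matrix.diagonalRingHom (Fin n) ℝ) (Polynomial.aeval d p) := by
    rw [Polynomial.aeval_def, Polynomial.aeval_def, Polynomial.hom_eval₂, hhom]
    rfl
  have h2 : (Polynomial.aeval d p : Fin n → ℝ) = fun i => p.eval (d i) := by
    funext i
    exact ((Polynomial.aeval_algHom_apply (Pi.evalAlgHom ℝ (fun _ : Fin n => ℝ) i) d p).symm).trans
      (congrFun (Polynomial.coe_aeval_eq_eval (d i)) p)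
  rw [h1, h2]
  rfl

private lemma charpoly_diagonal {n : ℕ} (d : Fin n → ℝ) :
    (Matrix.diagonal d).charpoly = ∏ i, (X - C (d i)) := by
  have h : Matrix.charmatrix (Matrix.diagonal d)
      = Matrix.diagonal (fun i => (X : ℝ[X]) - C (d i)) := by
    ext i j
    by_cases hij : i = j
    · subst hij
      simp
    · simp [Matrix.charmatrix_apply_ne _ _ _ hij, Matrix.diagonal_apply_ne _ hij]
  rw [Matrix.charpoly, h, Matrix.det_diagonal]

private lemma eval_deriv_prod {n : ℕ} (d : Fin n → ℝ) (i : Fin n) :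
    Polynomial.eval (d i) (Polynomial.derivative (∏ j, (X - C (d j))))
      = ∏ j ∈ Finset.univ.erase i, (d i - d j) := by
  rw [← Finset.mul_prod_erase _ _ (Finset.mem_univ i)]
  rw [Polynomial.derivative_mul]
  simp [Polynomial.eval_prod]

private lemma discPoly_ne_zero (n : ℕ) : discPoly n ≠ 0 := by
  intro h
  have h0 := eval_discPoly (n := n) (fun p => if p.1 = p.2 then ((p.1 : ℕ) : ℝ) else 0)
  rw [h, map_zero] at h0
  set d : Fin n → ℝ := fun i => ((i : ℕ) : ℝ) with hd
  have hdiag : (Matrix.of fun i j : Fin n =>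
      if i = j then ((i : ℕ) : ℝ) else 0) = Matrix.diagonal d := by
    ext i j
    by_cases hij : i = j
    · subst hij; simp [hd]
    · simp [hij, Matrix.diagonal_apply_ne _ hij]
  rw [hdiag, charpoly_diagonal, aeval_diagonal, Matrix.det_diagonal] at h0
  have : ∀ i : Fin n, Polynomial.eval (d i) (Polynomial.derivative (∏ j, (X - C (d j)))) ≠ 0 := by
    intro i
    rw [eval_deriv_prod]
    apply Finset.prod_ne_zero_iff.mpr
    intro j hj
    have hji : j ≠ i := (Finset.mem_erase.mp hj).1
    apply sub_ne_zero.mpr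
    intro hc
    apply hji
    apply Fin.val_injective
    have : ((j : ℕ) : ℝ) = ((i : ℕ) : ℝ) := by simpa [hd] using hc.symm
    exact_mod_cast this
  exact (Finset.prod_ne_zero_iff.mpr fun i _ => this i) h0.symm

private def rowEquiv (k n : ℕ) : (Fin n ⊕ (Fin k × Fin n)) ≃ (Fin (k + 1) × Fin n) where
  toFun := Sum.elim (fun j => (0, j)) (fun p => (p.1.succ, p.2))
  invFun := fun p => Fin.cases (Sum.inl p.2) (fun i => Sum.inr (i, p.2)) p.1
  left_inv := by rintro (j | ⟨i, j⟩) <;> simp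
  right_inv := by
    rintro ⟨i, j⟩
    refine Fin.cases ?_ ?_ i <;> simp

private lemma eval_sum_split {σ τ : Type*} (v : σ → ℝ) (w : τ → ℝ)
    (F : MvPolynomial (σ ⊕ τ) ℝ) :
    MvPolynomial.eval (Sum.elim v w) F =
      MvPolynomial.eval v
        (MvPolynomial.map (MvPolynomial.eval w) ((MvPolynomial.sumAlgEquiv ℝ σ τ) F)) := by
  have h : (MvPolynomial.eval (Sum.elim v w) : MvPolynomial (σ ⊕ τ) ℝ →+* ℝ) =
      ((MvPolynomial.eval v : MvPolynomial σ ℝ →+* ℝ).comp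
        ((MvPolynomial.map (MvPolynomial.eval w) :
            MvPolynomial σ (MvPolynomial τ ℝ) →+* MvPolynomial σ ℝ).comp
          (MvPolynomial.sumToIter ℝ σ τ))) := by
    apply MvPolynomial.ringHom_ext
    · intro r
      simp [MvPolynomial.sumToIter_C]
    · rintro (i | j) <;> simp [MvPolynomial.sumToIter_Xl, MvPolynomial.sumToIter_Xr]
  rw [show (MvPolynomial.sumAlgEquiv ℝ σ τ) F = MvPolynomial.sumToIter ℝ σ τ F from
      RingHom.congr_fun (MvPolynomial.ringHom_ext
        (f := (MvPolynomial.sumAlgEquiv ℝ σ τ).toRingEquiv.toRingHom)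
        (g := MvPolynomial.sumToIter ℝ σ τ)
        (by intro r; simp [MvPolynomial.sumToIter_C, MvPolynomial.sumAlgEquiv_C_inl])
        (by rintro (i | j) <;> simp [MvPolynomial.sumToIter_Xl, MvPolynomial.sumToIter_Xr,
          MvPolynomial.sumAlgEquiv_X_inl, MvPolynomial.sumAlgEquiv_X_inr])) F, h]
  rfl

private lemma rownull (n : ℕ) : ∀ (k : ℕ) (F : MvPolynomial (Fin k × Fin n) ℝ), F ≠ 0 →
    volume {A : Fin k → Fin n → ℝ | MvPolynomial.eval (fun p => A p.1 p.2) F = 0} = 0 := by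
  intro k
  induction k with
  | zero =>
    intro F hF
    obtain ⟨c, rfl⟩ := MvPolynomial.C_surjective (Fin 0 × Fin n) F
    have hc : c ≠ 0 := by simpa using hF
    convert measure_empty (μ := (volume : Measure (Fin 0 → Fin n → ℝ)))
    ext A; simp [hc]
  | succ k ih =>
    intro F hF
    set ε := rowEquiv k n with hεdef
    set F₀ := MvPolynomial.rename ⇑ε.symm F with hF₀def
    have hF₀ : F₀ ≠ 0 := by
      intro h
      exact hF ((MvPolynomial.rename_injective _ ε.symm.injective)
        (h.trans (map_zero (MvPolynomial.rename ⇑ε.symm)).symm))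
    have hFeq : F = MvPolynomial.rename ⇑ε F₀ := by
      rw [hF₀def, MvPolynomial.rename_rename, Equiv.self_comp_symm, MvPolynomial.rename_id, AlgHom.id_apply]
    set F' := (MvPolynomial.sumAlgEquiv ℝ (Fin n) (Fin k × Fin n)) F₀ with hF'def
    have hF' : F' ≠ 0 := fun h => hF₀ ((AlgEquiv.injective _)
      (h.trans (map_zero (MvPolynomial.sumAlgEquiv ℝ (Fin n) (Fin k × Fin n))).symm))
    obtain ⟨d, hd⟩ := MvPolynomial.ne_zero_iff.mp hF'
    have hkey : ∀ (v : Fin n → ℝ) (y : Fin k → Fin n → ℝ),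
        MvPolynomial.eval
            (fun p : Fin (k+1) × Fin n => (Fin.cons v y : Fin (k+1) → Fin n → ℝ) p.1 p.2) F
          = MvPolynomial.eval v
            (MvPolynomial.map (MvPolynomial.eval (fun p : Fin k × Fin n => y p.1 p.2)) F') := by
      intro v y
      conv_lhs => rw [hFeq]
      rw [MvPolynomial.eval_rename]
      have heq : (fun p : Fin (k+1) × Fin n => (Fin.cons v y : Fin (k+1) → Fin n → ℝ) p.1 p.2) ∘ ⇑ε
          = Sum.elim v (fun p : Fin k × Fin n => y p.1 p.2) := by
        funext s
        rcases s with j | ⟨i, j⟩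
        · simp [hεdef, rowEquiv]
        · simp [hεdef, rowEquiv]
      rw [heq, eval_sum_split]
    set T : Set ((Fin n → ℝ) × (Fin k → Fin n → ℝ)) :=
      {q | MvPolynomial.eval
        (fun p : Fin (k+1) × Fin n =>
          (Fin.cons q.1 q.2 : Fin (k+1) → Fin n → ℝ) p.1 p.2) F = 0} with hTdef
    have hcont : Continuous fun q : (Fin n → ℝ) × (Fin k → Fin n → ℝ) =>
        (fun p : Fin (k+1) × Fin n => (Fin.cons q.1 q.2 : Fin (k+1) → Fin n → ℝ) p.1 p.2) := by
      apply continuous_pi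
      rintro ⟨i, j⟩
      refine Fin.cases ?_ ?_ i
      · simpa [Function.comp_def] using (continuous_apply j).comp continuous_fst
      · intro i'
        simpa [Function.comp_def] using (continuous_apply j).comp ((continuous_apply i').comp continuous_snd)
    have hTmeas : MeasurableSet T :=
      measurableSet_eq_fun ((MvPolynomial.continuous_eval F).comp hcont).measurable
        measurable_const
    have hpre : {A : Fin (k+1) → Fin n → ℝ | MvPolynomial.eval (fun p => A p.1 p.2) F = 0}
        = (MeasurableEquiv.piFinSuccAbove (fun _ : Fin (k+1) => (Fin n → ℝ)) 0) ⁻¹' T := by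
      ext A
      simp only [Set.mem_setOf_eq, Set.mem_preimage, hTdef,
        MeasurableEquiv.piFinSuccAbove_apply, Fin.insertNthEquiv, Equiv.coe_fn_symm_mk]
      rw [show (Fin.cons (A 0) (Fin.removeNth 0 A) : Fin (k+1) → Fin n → ℝ) = A by
        rw [Fin.removeNth_zero]; exact Fin.cons_self_tail A]
    rw [hpre, (volume_preserving_piFinSuccAbove (fun _ : Fin (k+1) => (Fin n → ℝ)) 0).measure_preimage
      hTmeas.nullMeasurableSet]
    have hswap : (volume : Measure ((Fin n → ℝ) × (Fin k → Fin n → ℝ))) T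
        = ((volume : Measure (Fin k → Fin n → ℝ)).prod
            (volume : Measure (Fin n → ℝ))) (Prod.swap ⁻¹' T) := by
      rw [Measure.volume_eq_prod, ← Measure.prod_swap, Measure.map_apply measurable_swap hTmeas]
    rw [hswap, Measure.measure_prod_null (measurable_swap hTmeas)]
    have hae : ∀ᵐ y : Fin k → Fin n → ℝ,
        MvPolynomial.eval (fun p : Fin k × Fin n => y p.1 p.2) (MvPolynomial.coeff d F') ≠ 0 := by
      rw [ae_iff]
      simpa using ih _ hd
    filter_upwards [hae] with y hy
    have hpoly : MvPolynomial.map (MvPolynomial.eval (fun p : Fin k × Fin n => y p.1 p.2)) F' ≠ 0 := by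
      intro h
      apply hy
      rw [← MvPolynomial.coeff_map, h]
      simp
    have hset : (Prod.mk y ⁻¹' (Prod.swap ⁻¹' T))
        = {v : Fin n → ℝ | MvPolynomial.eval v
            (MvPolynomial.map (MvPolynomial.eval (fun p : Fin k × Fin n => y p.1 p.2)) F') = 0} := by
      ext v
      simp only [Set.mem_preimage, Set.mem_setOf_eq, hTdef, Prod.swap_prod_mk]
      rw [hkey]
    simp only [Pi.zero_apply]
    rw [hset]
    exact null_mv n _ hpoly

/-- For `n ≥ 1`, the set of `n × n` real matrices whose characteristic polynomial has a
repeated complex root has Lebesgue measure zero in `ℝ^{n×n}`. -/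
theorem measure_zero_of_matrices_with_repeated_eigenvalues
    (n : ℕ) (hn : 1 ≤ n) :
    MeasureTheory.volume {A : Fin n → Fin n → ℝ |
      ∃ z : ℂ, 2 ≤ ((Matrix.of A).charpoly.map (algebraMap ℝ ℂ)).rootMultiplicity z} = 0 := by
  apply measure_mono_null ?_ (rownull n n (discPoly n) (discPoly_ne_zero n))
  rintro A ⟨z, hz⟩
  show MvPolynomial.eval (fun p => A p.1 p.2) (discPoly n) = 0
  rw [eval_discPoly]
  exact det_aeval_deriv_eq_zero (Matrix.of A) z hz
end

section
/- Let C, D, E be real constants and let s : ℝ → ℝ be a differentiable function satisfying the scalar autonomous Riccati equation s'(t) = −C·s(t)² + D·s(t) + E for all t ∈ ℝ. Then s is monotone on ℝ (either monotonically nondecreasing or monotonically nonincreasing). In particular, in the two-phenotype CSC–NSCC model the CSC proportion can never overshoot its equilibrium value. -/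
open Set

/-- The Riccati right-hand side is Lipschitz on a bounded interval. -/
lemma riccati_lipschitzOnWith (C D : ℝ) (E M : ℝ) (hM : 0 ≤ M) :
    LipschitzOnWith (Real.toNNReal (2 * |C| * M + |D|))
      (fun x : ℝ => -(C * x ^ 2) + D * x + E) (Icc (-M) M) := by
  rw [lipschitzOnWith_iff_dist_le_mul]
  intro x hx y hy
  simp only [Real.dist_eq]
  have hK : ((Real.toNNReal (2 * |C| * M + |D|)) : ℝ) = 2 * |C| * M + |D| := by
    rw [Real.coe_toNNReal]
    positivity
  rw [hK]
  have h1 : -(C * x ^ 2) + D * x + E - (-(C * y ^ 2) + D * y + E)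
      = (x - y) * (-(C * (x + y)) + D) := by ring
  rw [h1, abs_mul]
  rw [mul_comm]
  apply mul_le_mul_of_nonneg_right _ (abs_nonneg _)
  calc |-(C * (x + y)) + D| ≤ |(C * (x + y))| + |D| := by
        rw [← abs_neg (C * (x + y))]; exact abs_add_le _ _
    _ ≤ 2 * |C| * M + |D| := by
        apply add_le_add_left
        rw [abs_mul]
        have hxy : |x + y| ≤ 2 * M := by
          have := abs_add_le x y
          have hx' : |x| ≤ M := abs_le.mpr ⟨hx.1, hx.2⟩
          have hy' : |y| ≤ M := abs_le.mpr ⟨hy.1, hy.2⟩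
          linarith
        calc |C| * |x + y| ≤ |C| * (2 * M) :=
              mul_le_mul_of_nonneg_left hxy (abs_nonneg _)
          _ = 2 * |C| * M := by ring

/-- A differentiable solution of the autonomous Riccati equation `s' = −C s² + D s + E` on `ℝ`
is monotone (either nondecreasing or nonincreasing); in particular the CSC proportion in the
two-phenotype model cannot overshoot its equilibrium. -/
theorem riccati_solution_monotone
    (C D E : ℝ) (s : ℝ → ℝ)
    (hs : ∀ t : ℝ, HasDerivAt s (-(C * s t ^ 2) + D * s t + E) t) :
    Monotone s ∨ Antitone s := by
  set f : ℝ → ℝ := fun x => -(C * x ^ 2) + D * x + E with hf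
  have hdiff : Differentiable ℝ s := fun t => (hs t).differentiableAt
  have hderiv : ∀ t, deriv s t = f (s t) := fun t => (hs t).deriv
  have hscont : Continuous s := hdiff.continuous
  have hfcont : Continuous fun t => f (s t) := by
    simp only [hf]; fun_prop
  by_cases hpos : ∀ t, 0 ≤ f (s t)
  · left
    apply monotone_of_deriv_nonneg hdiff
    intro t; rw [hderiv t]; exact hpos t
  by_cases hneg : ∀ t, f (s t) ≤ 0
  · right
    apply antitone_of_deriv_nonpos hdiff
    intro t; rw [hderiv t]; exact hneg t
  exfalso
  push_neg at hpos hneg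
  obtain ⟨a, ha⟩ := hpos
  obtain ⟨b, hb⟩ := hneg
  -- intermediate value: there is c with f (s c) = 0
  have hmem : (0 : ℝ) ∈ uIcc (f (s a)) (f (s b)) := by
    rw [Set.mem_uIcc]; left; exact ⟨ha.le, hb.le⟩
  obtain ⟨c, hc, hc0⟩ := intermediate_value_uIcc (hfcont.continuousOn (s := uIcc a b)) hmem
  -- set up a compact interval containing a, b, c in its interior
  set L : ℝ := min a (min b c) - 1 with hL
  set R : ℝ := max a (max b c) + 1 with hR
  have haI : a ∈ Ioo L R := by
    constructor
    · have : min a (min b c) ≤ a := min_le_left _ _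
      linarith
    · have : a ≤ max a (max b c) := le_max_left _ _
      linarith
  have hbI : b ∈ Ioo L R := by
    constructor
    · have h1 : min a (min b c) ≤ min b c := min_le_right _ _
      have h2 : min b c ≤ b := min_le_left _ _
      linarith
    · have h1 : max b c ≤ max a (max b c) := le_max_right _ _
      have h2 : b ≤ max b c := le_max_left _ _
      linarith
  have hcI : c ∈ Ioo L R := by
    constructor
    · have h1 : min a (min b c) ≤ min b c := min_le_right _ _
      have h2 : min b c ≤ c := min_le_right _ _
      linarith
    · have h1 : max b c ≤ max a (max b c) := le_max_right _ _
      have h2 : c ≤ max b c := le_max_right _ _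
      linarith
  -- bound |s| on [L, R]
  have hLR : L ≤ R := le_of_lt (lt_trans haI.1 haI.2)
  obtain ⟨M0, hM0⟩ := (isCompact_Icc.image hscont).isBounded.subset_closedBall 0
  have hbound : ∀ t ∈ Icc L R, |s t| ≤ M0 := by
    intro t ht
    have := hM0 ⟨t, ht, rfl⟩
    simpa [Real.dist_eq] using this
  set M : ℝ := max M0 0 with hM
  have hMnn : 0 ≤ M := le_max_right _ _
  have hball : ∀ t ∈ Ioo L R, s t ∈ Icc (-M) M := by
    intro t ht
    have h := hbound t (Ioo_subset_Icc_self ht)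
    have : |s t| ≤ M := h.trans (le_max_left _ _)
    exact abs_le.mp this
  -- uniqueness of solutions: s coincides with the constant s c on Ioo L R
  have hlip := riccati_lipschitzOnWith C D E M hMnn
  have heq : EqOn s (fun _ => s c) (Ioo L R) := by
    apply ODE_solution_unique_of_mem_Ioo
      (v := fun _ x => f x) (s := fun _ => Icc (-M) M)
      (K := Real.toNNReal (2 * |C| * M + |D|)) (fun _ _ => hlip) hcI
    · intro t ht
      exact ⟨hs t, hball t ht⟩
    · intro t ht
      refine ⟨?_, hball c hcI⟩
      have : f (s c) = 0 := hc0
      simpa [this] using (hasDerivAt_const t (s c))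
    · rfl
  -- hence s has derivative 0 at a, contradicting f (s a) > 0
  have hda : HasDerivAt s 0 a := by
    have hfeq : s =ᶠ[nhds a] fun _ => s c :=
      Filter.eventuallyEq_of_mem (isOpen_Ioo.mem_nhds haI) heq
    exact (hasDerivAt_const a (s c)).congr_of_eventuallyEq hfeq
  have h0 : f (s a) = 0 := (hs a).unique hda
  linarith
end
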